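/- arXiv:2409.00611 — 4 statements merged into one kernel-verified Lean document; each statement's English description precedes it below -/
import Mathlib

section
/- Let (M,N) be an abstract divisorial space over ℚ and let N̄ denote the closure of the cone N with respect to the finite subspace topology on M. Then x ∈ N̄ if and only if there exists y ∈ N such that x + (1/n)·y ∈ N for every positive integer n. -/
open Filter

private lemma sum_mem_cone {M : Type*} [AddCommGroup M] {N : Set M} (h0 : (0:M) ∈ N)
    (hNadd : ∀ x ∈ N, ∀ y ∈ N, x + y ∈ N) {ι : Type*} (t : Finset ι) (g : ι → M)
    (hg : ∀ i ∈ t, g i ∈ N) : ∑ i ∈ t, g i ∈ N :=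
  Finset.sum_induction g (· ∈ N) (fun a b ha hb => hNadd a ha b hb) h0 hg

/-- Let `(M,N)` be an abstract divisorial space over `ℚ` and let `N̄`
denote the closure of the cone `N` with respect to the finite subspace topology on `M`
(equivalently, the union over finite-dimensional subspaces `E` of the closures of
`N ∩ E` in `E`; closure in `E` being tested by convergence of all linear functionals).
Then `x ∈ N̄` if and only if there exists `y ∈ N` such that `x + (1/n) • y ∈ N` for
every positive integer `n`. -/
theorem statement1 {M : Type*} [AddCommGroup M] [Module ℚ M] [PartialOrder M]
    (hcov : ∀ x y z : M, x ≤ y → x + z ≤ y + z)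
    (hsmul : ∀ r : ℚ, 0 ≤ r → ∀ x y : M, x ≤ y → r • x ≤ r • y)
    (N : Set M)
    (hNadd : ∀ x ∈ N, ∀ y ∈ N, x + y ∈ N)
    (hNsmul : ∀ r : ℚ, 0 ≤ r → ∀ x ∈ N, r • x ∈ N)
    (hspan : ∀ x : M, ∃ a ∈ N, ∃ c ∈ N, x = a - c)
    (x : M) :
    (∃ E : Submodule ℚ M, FiniteDimensional ℚ E ∧ x ∈ E ∧
        ∃ y : ℕ → M, (∀ j, y j ∈ N ∧ y j ∈ E) ∧
          ∀ f : M →ₗ[ℚ] ℚ, Tendsto (fun j => f (y j)) atTop (nhds (f x))) ↔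
      ∃ y ∈ N, ∀ n : ℕ, 0 < n → x + ((n : ℚ))⁻¹ • y ∈ N := by
  obtain ⟨a0, ha0, -⟩ := hspan 0
  have h0N : (0 : M) ∈ N := by simpa using hNsmul 0 le_rfl a0 ha0
  constructor
  · rintro ⟨E, hEfd, hxE, y, hy, htend⟩
    have hyN : ∀ j, y j ∈ N := fun j => (hy j).1
    set F : Submodule ℚ M := Submodule.span ℚ (Set.range y) with hFdef
    have hyF : ∀ j, y j ∈ F := fun j => Submodule.subset_span ⟨j, rfl⟩
    have hFE : F ≤ E := Submodule.span_le.2 (by rintro _ ⟨j, rfl⟩; exact (hy j).2)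
    haveI : FiniteDimensional ℚ E := hEfd
    haveI : FiniteDimensional ℚ F := Submodule.finiteDimensional_of_le hFE
    -- x ∈ F, by duality
    have hxF : x ∈ F := by
      have hall : ∀ g : Module.Dual ℚ (M ⧸ F), g (F.mkQ x) = 0 := by
        intro g
        have h1 : Tendsto (fun j => (g.comp F.mkQ) (y j)) atTop
            (nhds ((g.comp F.mkQ) x)) := htend _
        have h2 : ∀ j, (g.comp F.mkQ) (y j) = 0 := by
          intro j
          have : F.mkQ (y j) = 0 := by
            simpa [Submodule.mkQ_apply] using (Submodule.Quotient.mk_eq_zero F).2 (hyF j)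
          simp [LinearMap.comp_apply, this]
        have h3 : Tendsto (fun _ : ℕ => (0:ℚ)) atTop (nhds ((g.comp F.mkQ) x)) := by
          simpa [h2] using h1
        simpa using tendsto_nhds_unique h3 tendsto_const_nhds
      have := (Module.forall_dual_apply_eq_zero_iff ℚ (F.mkQ x)).1 hall
      simpa [Submodule.mkQ_apply, Submodule.Quotient.mk_eq_zero] using this
    -- work inside F
    set x' : F := ⟨x, hxF⟩ with hx'def
    set y' : ℕ → F := fun j => ⟨y j, hyF j⟩ with hy'def
    have hspan' : Submodule.span ℚ (Set.range y') = ⊤ := by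
      apply Submodule.map_injective_of_injective F.injective_subtype
      rw [Submodule.map_span, Submodule.map_top, Submodule.range_subtype]
      congr 1
      ext m
      constructor
      · rintro ⟨-, ⟨j, rfl⟩, rfl⟩; exact ⟨j, rfl⟩
      · rintro ⟨j, rfl⟩; exact ⟨y' j, ⟨j, rfl⟩, rfl⟩
    obtain ⟨s, hs_sub, hs_span, hs_li⟩ := exists_linearIndependent ℚ (Set.range y')
    rw [hspan'] at hs_span
    have hsfin : s.Finite := hs_li.setFinite
    haveI : Fintype s := hsfin.fintype
    let B : Module.Basis s ℚ F := Module.Basis.mk hs_li (by rw [Subtype.range_coe, hs_span])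
    have hB : ∀ i : s, B i = (i : F) := fun i => Module.Basis.mk_apply _ _ _
    have hBN : ∀ i : s, ((B i : F) : M) ∈ N := by
      intro i
      obtain ⟨j, hj⟩ := hs_sub i.2
      rw [hB i, ← hj]
      exact hyN j
    -- projection onto F
    obtain ⟨F', hcompl⟩ := Submodule.exists_isCompl F
    set π : M →ₗ[ℚ] F := F.linearProjOfIsCompl F' hcompl with hπdef
    have hπ : ∀ v : F, π (v : M) = v := fun v =>
      Submodule.linearProjOfIsCompl_apply_left hcompl v
    -- the element y
    refine ⟨∑ i : s, ((B i : F) : M), sum_mem_cone h0N hNadd _ _ (fun i _ => hBN i), ?_⟩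
    intro n hn
    set ε : ℚ := (n : ℚ)⁻¹ with hεdef
    have hε : 0 < ε := by positivity
    have hev : ∀ᶠ j in atTop, ∀ i : s,
        B.repr (y' j) i < B.repr x' i + ε := by
      rw [eventually_all]
      intro i
      have h1 := (htend ((B.coord i).comp π)).eventually_lt_const
        (lt_add_of_pos_right (((B.coord i).comp π) x) hε)
      refine h1.mono fun j hj => ?_
      have e1 : ((B.coord i).comp π) (y j) = B.repr (y' j) i := by
        simp [LinearMap.comp_apply, hπ (y' j), Module.Basis.coord_apply]
        exact congrArg (fun v => B.repr v i) (hπ (y' j))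
      have e2 : ((B.coord i).comp π) x = B.repr x' i := by
        simp [LinearMap.comp_apply, hπ x', Module.Basis.coord_apply]
        exact congrArg (fun v => B.repr v i) (hπ x')
      rwa [e1, e2] at hj
    obtain ⟨j, hj⟩ := hev.exists
    set q : s → ℚ := fun i => B.repr x' i - B.repr (y' j) i with hqdef
    have hq : ∀ i, 0 ≤ q i + ε := by
      intro i
      have := hj i
      simp only [hqdef]
      linarith
    have hx'dec : x' = y' j + ∑ i : s, q i • B i := by
      have h1 := B.sum_repr x'
      have h2 := B.sum_repr (y' j)
      simp only [hqdef, sub_smul, Finset.sum_sub_distrib, h1, h2]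
      abel
    have hxdec : x = y j + ∑ i : s, q i • ((B i : F) : M) := by
      have := congrArg F.subtype hx'dec
      simpa [map_sum, map_smul] using this
    have key : x + ε • ∑ i : s, ((B i : F) : M)
        = y j + ∑ i : s, (q i + ε) • ((B i : F) : M) := by
      rw [hxdec, Finset.smul_sum]
      simp only [add_smul]
      rw [Finset.sum_add_distrib]
      abel
    rw [key]
    exact hNadd _ (hyN j) _
      (sum_mem_cone h0N hNadd _ _ (fun i _ => hNsmul _ (hq i) _ (hBN i)))
  · rintro ⟨yy, hyyN, h⟩
    refine ⟨Submodule.span ℚ {x, yy}, ?_, Submodule.subset_span (by simp), ?_⟩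
    · exact FiniteDimensional.span_of_finite ℚ (Set.toFinite _)
    refine ⟨fun j => x + ((j : ℚ) + 1)⁻¹ • yy, fun j => ⟨?_, ?_⟩, ?_⟩
    · have := h (j + 1) j.succ_pos
      simpa [Nat.cast_add] using this
    · exact Submodule.add_mem _ (Submodule.subset_span (by simp))
        (Submodule.smul_mem _ _ (Submodule.subset_span (by simp)))
    · intro f
      have h1 : Tendsto (fun j : ℕ => ((j : ℚ) + 1)⁻¹) atTop (nhds 0) :=
        tendsto_inv_atTop_zero.comp
          (tendsto_atTop_add_const_right atTop 1 tendsto_natCast_atTop_atTop)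
      have h2 : Tendsto (fun j : ℕ => f x + ((j : ℚ) + 1)⁻¹ * f yy) atTop
          (nhds (f x + 0 * f yy)) := ((h1.mul_const (f yy)).const_add (f x))
      simpa [map_add, map_smul, smul_eq_mul] using h2
end

section
/- Let (M,N) be an abstract divisorial space over ℚ admitting a positively non-degenerate (n+1)-intersection map h : (M,N)^{n+1} → (ℝ, ℝ_{≥0}). Let M_ℝ = M ⊗_ℚ ℝ and let (M_ℝ)_{≥0} be the cone in M_ℝ generated by the image of M_{≥0}. Then (M_ℝ)_{≥0} ∩ (−(M_ℝ)_{≥0}) = {0}, i.e. the generated cone is pointed, so M_ℝ is an ordered ℝ-vector space with positive cone (M_ℝ)_{≥0}. -/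
open scoped TensorProduct

/-- The cone in `M_ℝ = ℝ ⊗[ℚ] M` generated by the image of `M_{≥0}`: all finite
nonnegative real combinations of elements of `M_{≥0}`. -/
def ratRealCone (M : Type*) [AddCommGroup M] [Module ℚ M] [PartialOrder M] :
    Set (ℝ ⊗[ℚ] M) :=
  {z | ∃ (r : ℕ) (lam : Fin r → ℝ) (x : Fin r → M),
      (∀ i, 0 ≤ lam i) ∧ (∀ i, 0 ≤ x i) ∧ z = ∑ i, lam i ⊗ₜ[ℚ] x i}

lemma ratRealCone_zero {M : Type*} [AddCommGroup M] [Module ℚ M] [PartialOrder M] :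
    (0 : ℝ ⊗[ℚ] M) ∈ ratRealCone M :=
  ⟨0, fun _ => 0, fun _ => 0, fun i => le_refl _, fun i => le_refl _, by simp⟩

lemma ratRealCone_add {M : Type*} [AddCommGroup M] [Module ℚ M] [PartialOrder M]
    {z w : ℝ ⊗[ℚ] M} (hz : z ∈ ratRealCone M) (hw : w ∈ ratRealCone M) :
    z + w ∈ ratRealCone M := by
  obtain ⟨r₁, lam₁, x₁, hlam₁, hx₁, hz⟩ := hz
  obtain ⟨r₂, lam₂, x₂, hlam₂, hx₂, hw⟩ := hw
  refine ⟨r₁ + r₂, Fin.addCases (motive := fun _ => ℝ) lam₁ lam₂,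
    Fin.addCases (motive := fun _ => M) x₁ x₂, ?_, ?_, ?_⟩
  · intro i
    exact Fin.addCases
      (motive := fun i => 0 ≤ Fin.addCases (motive := fun _ => ℝ) lam₁ lam₂ i) (fun j => by simp [hlam₁ j]) (fun j => by simp [hlam₂ j]) i
  · intro i
    exact Fin.addCases
      (motive := fun i => 0 ≤ Fin.addCases (motive := fun _ => M) x₁ x₂ i) (fun j => by simp [hx₁ j]) (fun j => by simp [hx₂ j]) i
  · rw [hz, hw, Fin.sum_univ_add]
    simp

lemma ratRealCone_smul {M : Type*} [AddCommGroup M] [Module ℚ M] [PartialOrder M]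
    {r : ℝ} (hr : 0 ≤ r) {z : ℝ ⊗[ℚ] M} (hz : z ∈ ratRealCone M) :
    r • z ∈ ratRealCone M := by
  obtain ⟨t, lam, x, hlam, hx, hz⟩ := hz
  refine ⟨t, fun i => r * lam i, x, fun i => mul_nonneg hr (hlam i), hx, ?_⟩
  rw [hz, Finset.smul_sum]
  refine Finset.sum_congr rfl fun i _ => ?_
  rw [TensorProduct.smul_tmul', smul_eq_mul]

/-- If the abstract divisorial space `(M,N)` over `ℚ` carries a
positively non-degenerate `(n+1)`-intersection map to `(ℝ, ℝ_{≥0})`, then the cone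
`(M_ℝ)_{≥0}` generated by `M_{≥0}` in `M_ℝ = ℝ ⊗_ℚ M` is pointed, so `M_ℝ` becomes an
ordered `ℝ`-vector space with positive cone `(M_ℝ)_{≥0}`. -/
theorem statement7 {M : Type*} [AddCommGroup M] [Module ℚ M] [PartialOrder M]
    (hcov : ∀ x y z : M, x ≤ y → x + z ≤ y + z)
    (hsmul : ∀ r : ℚ, 0 ≤ r → ∀ x y : M, x ≤ y → r • x ≤ r • y)
    (N : Set M)
    (hNadd : ∀ x ∈ N, ∀ y ∈ N, x + y ∈ N)
    (hNsmul : ∀ r : ℚ, 0 ≤ r → ∀ x ∈ N, r • x ∈ N)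
    (hspan : ∀ x : M, ∃ a ∈ N, ∃ c ∈ N, x = a - c)
    {n : ℕ} (h : MultilinearMap ℚ (fun _ : Fin (n + 1) => M) ℝ)
    (hsymm : ∀ (σ : Equiv.Perm (Fin (n + 1))) (v : Fin (n + 1) → M), h (v ∘ σ) = h v)
    (hNEF : ∀ v : Fin (n + 1) → M, (∀ i, v i ∈ N) → 0 ≤ h v)
    (hEFF : ∀ v : Fin (n + 1) → M, 0 ≤ v 0 → (∀ i, i ≠ 0 → v i ∈ N) → 0 ≤ h v)
    (hAMP : ∀ x : M, 0 < x → ∃ a ∈ N, 0 < h (fun i => if i = 0 then x else a)) :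
    (ratRealCone M ∩ (-ratRealCone M) = {0}) ∧
    ∃ le : (ℝ ⊗[ℚ] M) → (ℝ ⊗[ℚ] M) → Prop,
      (∀ z, le z z) ∧
      (∀ z w, le z w → le w z → z = w) ∧
      (∀ z w u, le z w → le w u → le z u) ∧
      (∀ z w u, le z w → le (z + u) (w + u)) ∧
      (∀ r : ℝ, 0 ≤ r → ∀ z w, le z w → le (r • z) (r • w)) ∧
      ratRealCone M = {z | le 0 z} := by
  classical
  -- sums of elements of N lie in N
  have hNsum : ∀ (t : ℕ) (f : Fin (t + 1) → M), (∀ i, f i ∈ N) → (∑ i, f i) ∈ N := by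
    intro t
    induction t with
    | zero => intro f hf; simpa using hf 0
    | succ t ih =>
      intro f hf
      rw [Fin.sum_univ_succ]
      exact hNadd _ (hf 0) _ (ih (fun i => f i.succ) (fun i => hf i.succ))
  -- key step: a vanishing nonnegative combination has all terms zero
  have key : ∀ (t : ℕ) (ν : Fin t → ℝ) (w : Fin t → M), (∀ k, 0 ≤ ν k) →
      (∀ k, 0 ≤ w k) → (∑ k, ν k ⊗ₜ[ℚ] w k) = 0 → ∀ k, ν k ⊗ₜ[ℚ] w k = 0 := by
    intro t ν w hν hw hsum
    obtain ⟨b, hbN, -⟩ := hspan 0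
    have hA : ∀ k : Fin t, ∃ a, a ∈ N ∧
        (0 < w k → 0 < h (fun i => if i = 0 then w k else a)) := by
      intro k
      by_cases hk : 0 < w k
      · obtain ⟨a, haN, hpos⟩ := hAMP (w k) hk
        exact ⟨a, haN, fun _ => hpos⟩
      · exact ⟨b, hbN, fun h' => absurd h' hk⟩
    choose A hAN hApos using hA
    set B : Fin (t + 1) → M := Fin.cons b A with hB
    have hBN : ∀ m, B m ∈ N := by
      intro m
      refine Fin.cases ?_ ?_ m <;> simp [hB, hbN, hAN]
    set a : M := ∑ m, B m with ha
    have haN : a ∈ N := hNsum t B hBN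
    -- positivity of h(x, a, ..., a) for positive x in the family
    have hpos : ∀ k : Fin t, 0 < w k → 0 < h (fun i => if i = 0 then w k else a) := by
      intro k hk
      have hexp := h.map_sum_finset (fun i m => if i = 0 then w k else B m)
        (fun i => if i = 0 then {k.succ} else Finset.univ)
      have hfun : (fun i : Fin (n + 1) =>
          ∑ j ∈ (if i = 0 then {k.succ} else Finset.univ),
            (if i = 0 then w k else B j)) = fun i => if i = 0 then w k else a := by
        funext i
        by_cases hi : i = 0 <;> simp [hi, ha]
      rw [hfun] at hexp
      rw [hexp]
      refine Finset.sum_pos' ?_ ?_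
      · intro r _
        refine hEFF _ ?_ ?_
        · simpa using hw k
        · intro i hi; simp [hi, hBN]
      · refine ⟨fun _ => k.succ, ?_, ?_⟩
        · rw [Fintype.mem_piFinset]
          intro i
          by_cases hi : i = 0 <;> simp [hi]
        · have : (fun i : Fin (n + 1) => if i = 0 then w k else B k.succ) =
              fun i => if i = 0 then w k else A k := by
            simp [hB]
          rw [this]
          exact hApos k hk
    -- the linear functional x ↦ h(x, a, ..., a)
    set L : M →ₗ[ℚ] ℝ := h.toLinearMap (fun _ => a) 0 with hLdef
    have hL : ∀ x : M, L x = h (fun i => if i = 0 then x else a) := by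
      intro x
      show h (Function.update (fun _ => a) 0 x) = _
      congr 1
      funext i
      simp [Function.update_apply]
    have hLnn : ∀ k, 0 ≤ L (w k) := by
      intro k
      rw [hL]
      refine hEFF _ ?_ ?_
      · simpa using hw k
      · intro i hi; simp [hi, haN]
    -- extend to the tensor product
    set bl : ℝ →ₗ[ℚ] M →ₗ[ℚ] ℝ := LinearMap.mk₂ ℚ (fun r x => r * L x)
      (fun r s x => by ring)
      (fun q r x => by show (q • r) * L x = q • (r * L x); rw [smul_mul_assoc])
      (fun r x y => by show r * L (x + y) = r * L x + r * L y; rw [map_add]; ring)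
      (fun q r x => by
        show r * L (q • x) = q • (r * L x); rw [map_smul, mul_smul_comm]) with hbl
    set Φ : ℝ ⊗[ℚ] M →ₗ[ℚ] ℝ := TensorProduct.lift bl with hΦ
    have hΦt : ∀ (r : ℝ) (x : M), Φ (r ⊗ₜ[ℚ] x) = r * L x := by
      intro r x; simp [hΦ, hbl]
    have hsum0 : ∑ k, ν k * L (w k) = 0 := by
      have := congrArg Φ hsum
      rw [map_sum, map_zero] at this
      simpa [hΦt] using this
    have hterm : ∀ k ∈ Finset.univ, ν k * L (w k) = 0 :=
      (Finset.sum_eq_zero_iff_of_nonneg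
        (fun k _ => mul_nonneg (hν k) (hLnn k))).mp hsum0
    intro k
    rcases eq_or_lt_of_le (hw k) with hk | hk
    · rw [← hk, TensorProduct.tmul_zero]
    · have hLpos : 0 < L (w k) := by rw [hL]; exact hpos k hk
      have : ν k = 0 := by
        rcases mul_eq_zero.mp (hterm k (Finset.mem_univ k)) with h' | h'
        · exact h'
        · exact absurd h' (ne_of_gt hLpos)
      rw [this, TensorProduct.zero_tmul]
  -- pointedness
  have hpt : ratRealCone M ∩ (-ratRealCone M) = {0} := by
    ext z
    simp only [Set.mem_inter_iff, Set.mem_neg, Set.mem_singleton_iff]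
    constructor
    · rintro ⟨⟨r, lam, x, hlam, hx, hz⟩, ⟨s, mu, y, hmu, hy, hnz⟩⟩
      have hνnn : ∀ k, 0 ≤ Fin.addCases (motive := fun _ => ℝ) lam mu k := by
        intro k
        exact Fin.addCases
          (motive := fun k => 0 ≤ Fin.addCases (motive := fun _ => ℝ) lam mu k) (fun j => by simp [hlam j]) (fun j => by simp [hmu j]) k
      have hwnn : ∀ k, 0 ≤ Fin.addCases (motive := fun _ => M) x y k := by
        intro k
        exact Fin.addCases
          (motive := fun k => 0 ≤ Fin.addCases (motive := fun _ => M) x y k) (fun j => by simp [hx j]) (fun j => by simp [hy j]) k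
      have hsum : ∑ k, Fin.addCases (motive := fun _ => ℝ) lam mu k ⊗ₜ[ℚ]
          Fin.addCases (motive := fun _ => M) x y k = 0 := by
        rw [Fin.sum_univ_add]
        simp only [Fin.addCases_left, Fin.addCases_right]
        rw [← hz, ← hnz]
        simp
      have hall := key (r + s) _ _ hνnn hwnn hsum
      rw [hz]
      refine Finset.sum_eq_zero fun i _ => ?_
      have := hall (Fin.castAdd s i)
      simpa using this
    · rintro rfl
      exact ⟨ratRealCone_zero, by simpa using ratRealCone_zero⟩
  refine ⟨hpt, fun z w => w - z ∈ ratRealCone M, ?_, ?_, ?_, ?_, ?_, ?_⟩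
  · intro z; simpa using ratRealCone_zero
  · intro z w hzw hwz
    have hmem : z - w ∈ ratRealCone M ∩ (-ratRealCone M) := by
      refine ⟨hwz, ?_⟩
      rw [Set.mem_neg, neg_sub]
      exact hzw
    rw [hpt, Set.mem_singleton_iff, sub_eq_zero] at hmem
    exact hmem
  · intro z w u hzw hwu
    have := ratRealCone_add hwu hzw
    rwa [sub_add_sub_cancel] at this
  · intro z w u hzw
    have : w + u - (z + u) = w - z := by abel
    rwa [this]
  · intro r hr z w hzw
    have := ratRealCone_smul hr hzw
    rwa [smul_sub] at this
  · ext z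
    simp
end

section
/- Let h : (M,N)^{n+1} → (M′,N′) be an (n+1)-intersection map of abstract divisorial spaces, let b ∈ M_{≥0} and b′ ∈ M′_{≥0} ∩ N′, and suppose there is a pull-back φ(b′) ∈ M_{≥0} ∩ N for h at b′ with b ≤ φ(b′). Then the restriction h : N^{n+1} → N′ is continuous when N carries the topology induced by the pseudo-metric d_b and N′ carries the topology induced by d_{b′}. Concretely: for all x₀,…,x_n ∈ N and all ε ∈ 𝕂_{>0}, there exists δ ∈ 𝕂_{>0} such that whenever y₀,…,y_n ∈ N satisfy −δ·b ≤ x_k − y_k ≤ δ·b for all k, one has −ε·b′ ≤ h(y₀,…,y_n) − h(x₀,…,x_n) ≤ ε·b′. -/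
/-- Let `h : (M,N)^{n+1} → (M′,N′)` be an `(n+1)`-intersection map,
`b ∈ M_{≥0}`, `b′ ∈ M′_{≥0} ∩ N′`, and suppose there is a pull-back
`φ(b′) ∈ M_{≥0} ∩ N` for `h` at `b′` with `b ≤ φ(b′)`.  Then `h : N^{n+1} → N′` is
continuous for the `d_b`- and `d_{b′}`-topologies; concretely: for all
`x₀,…,x_n ∈ N` and `ε ∈ 𝕂_{>0}` there is `δ ∈ 𝕂_{>0}` such that whenever
`y₀,…,y_n ∈ N` satisfy `-δ·b ≤ x_k - y_k ≤ δ·b` for all `k`, one has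
`-ε·b′ ≤ h(y₀,…,y_n) - h(x₀,…,x_n) ≤ ε·b′`. -/
theorem statement9 {K M M' : Type*} [Field K] [LinearOrder K] [IsStrictOrderedRing K]
    [AddCommGroup M] [Module K M] [PartialOrder M]
    [AddCommGroup M'] [Module K M'] [PartialOrder M']
    (hcov : ∀ x y z : M, x ≤ y → x + z ≤ y + z)
    (hsmul : ∀ r : K, 0 ≤ r → ∀ x y : M, x ≤ y → r • x ≤ r • y)
    (hcov' : ∀ x y z : M', x ≤ y → x + z ≤ y + z)
    (hsmul' : ∀ r : K, 0 ≤ r → ∀ x y : M', x ≤ y → r • x ≤ r • y)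
    (N : Set M)
    (hNadd : ∀ x ∈ N, ∀ y ∈ N, x + y ∈ N)
    (hNsmul : ∀ r : K, 0 ≤ r → ∀ x ∈ N, r • x ∈ N)
    (hspan : ∀ x : M, ∃ a ∈ N, ∃ c ∈ N, x = a - c)
    (N' : Set M')
    (hNadd' : ∀ x ∈ N', ∀ y ∈ N', x + y ∈ N')
    (hNsmul' : ∀ r : K, 0 ≤ r → ∀ x ∈ N', r • x ∈ N')
    (hspan' : ∀ x : M', ∃ a ∈ N', ∃ c ∈ N', x = a - c)
    {n : ℕ} (h : MultilinearMap K (fun _ : Fin (n + 1) => M) M')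
    (hsymm : ∀ (σ : Equiv.Perm (Fin (n + 1))) (v : Fin (n + 1) → M), h (v ∘ σ) = h v)
    (hNEF : ∀ v : Fin (n + 1) → M, (∀ i, v i ∈ N) → h v ∈ N')
    (hEFF : ∀ v : Fin (n + 1) → M, 0 ≤ v 0 → (∀ i, i ≠ 0 → v i ∈ N) → 0 ≤ h v)
    (b : M) (hb : 0 ≤ b)
    (b' : M') (hb'pos : 0 ≤ b') (hb'N : b' ∈ N')
    (φb' : M) (hφpos : 0 ≤ φb') (hφN : φb' ∈ N)
    (hpull : ∀ v : Fin n → M, ∃ c : K, h (Fin.cons φb' v) = c • b')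
    (hble : b ≤ φb') :
    ∀ x : Fin (n + 1) → M, (∀ k, x k ∈ N) → ∀ ε : K, 0 < ε →
      ∃ δ : K, 0 < δ ∧ ∀ y : Fin (n + 1) → M, (∀ k, y k ∈ N) →
        (∀ k, -(δ • b) ≤ x k - y k ∧ x k - y k ≤ δ • b) →
        (-(ε • b') ≤ h y - h x ∧ h y - h x ≤ ε • b') := by

  classical
  letI : IsOrderedAddMonoid M :=
    { add_le_add_left := fun a c hac z => by
        have := hcov a c z hac
        simpa [add_comm] using this }
  letI : IsOrderedAddMonoid M' :=
    { add_le_add_left := fun a c hac z => by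
        have := hcov' a c z hac
        simpa [add_comm] using this }
  -- positivity in one slot
  have hpos : ∀ (v : Fin (n+1) → M) (k : Fin (n+1)) (t : M), 0 ≤ t →
      (∀ i, i ≠ k → v i ∈ N) → 0 ≤ h (Function.update v k t) := by
    intro v k t ht hv
    rw [← hsymm (Equiv.swap 0 k) (Function.update v k t)]
    apply hEFF
    · show 0 ≤ (Function.update v k t ∘ (Equiv.swap 0 k)) 0
      simp only [Function.comp_apply]
      rw [Equiv.swap_apply_left, Function.update_self]
      exact ht
    · intro i hi
      have hik : (Equiv.swap 0 k) i ≠ k := by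
        intro hc
        apply hi
        have h2 := congrArg (Equiv.swap 0 k) hc
        rw [Equiv.swap_apply_self, Equiv.swap_apply_right] at h2
        exact h2
      simp only [Function.comp_apply, Function.update_of_ne hik]
      exact hv _ hik
  -- monotonicity in one slot
  have hmono : ∀ (v : Fin (n+1) → M) (k : Fin (n+1)) (s t : M), s ≤ t →
      (∀ i, i ≠ k → v i ∈ N) →
      h (Function.update v k s) ≤ h (Function.update v k t) := by
    intro v k s t hst hv
    have e : s + (t - s) = t := by abel
    calc h (Function.update v k s)
        ≤ h (Function.update v k s) + h (Function.update v k (t - s)) :=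
          le_add_of_nonneg_right (hpos v k (t - s) (sub_nonneg.mpr hst) hv)
      _ = h (Function.update v k (s + (t - s))) := (h.map_update_add v k s (t - s)).symm
      _ = h (Function.update v k t) := by rw [e]
  -- pull-back in any slot
  have hpullk : ∀ (v : Fin (n+1) → M) (k : Fin (n+1)),
      ∃ c : K, h (Function.update v k φb') = c • b' := by
    intro v k
    set w : Fin (n+1) → M := Function.update v k φb' ∘ (Equiv.swap 0 k) with hw
    have h1 : h w = h (Function.update v k φb') := hsymm _ _
    have hw0 : w 0 = φb' := by
      simp only [hw, Function.comp_apply]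
      rw [Equiv.swap_apply_left, Function.update_self]
    obtain ⟨c, hc⟩ := hpull (Fin.tail w)
    refine ⟨c, ?_⟩
    rw [← h1, ← hc]
    conv_lhs => rw [← Fin.cons_self_tail w, hw0]
  -- telescoping bound
  have main : ∀ (v v' : Fin (n+1) → M) (g : M'),
      (∀ (k : Fin (n+1)) (u : Fin (n+1) → M), (∀ i, u i = v i ∨ u i = v' i) →
        h (Function.update u k (v' k - v k)) ≤ g) →
      h v' - h v ≤ (n+1) • g := by
    intro v v' g hterm
    have claim : ∀ m : ℕ, m ≤ n + 1 →
        h (fun i => if (i:ℕ) < m then v' i else v i) - h v ≤ m • g := by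
      intro m
      induction m with
      | zero => intro _; simp
      | succ m ih =>
        intro hm
        have hm' : m ≤ n + 1 := Nat.le_of_succ_le hm
        have hmn : m < n + 1 := hm
        set k : Fin (n+1) := ⟨m, hmn⟩ with hk
        set W : Fin (n+1) → M := fun i => if (i:ℕ) < m then v' i else v i with hWdef
        have hWvals : ∀ i, W i = v i ∨ W i = v' i := by
          intro i
          simp only [hWdef]
          split
          · exact Or.inr rfl
          · exact Or.inl rfl
        have hW1 : (fun i : Fin (n+1) => if (i:ℕ) < m + 1 then v' i else v i)
            = Function.update W k (v' k) := by
          funext i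
          by_cases hik : i = k
          · subst hik
            simp [hWdef, hk]
          · rw [Function.update_of_ne hik]
            have hval : (i:ℕ) ≠ m := by
              intro hc
              exact hik (Fin.ext (by simp [hk, hc]))
            simp only [hWdef]
            by_cases h2 : (i:ℕ) < m
            · rw [if_pos h2, if_pos (Nat.lt_succ_of_lt h2)]
            · rw [if_neg h2, if_neg (by omega)]
        have hWm : Function.update W k (v k) = W := by
          have hWk : W k = v k := by simp [hWdef, hk]
          rw [← hWk, Function.update_eq_self]
        have e : v' k = v k + (v' k - v k) := by abel
        have hupd : h (Function.update W k (v' k))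
            = h (Function.update W k (v k)) + h (Function.update W k (v' k - v k)) := by
          conv_lhs => rw [e]
          exact h.map_update_add W k (v k) (v' k - v k)
        calc h (fun i : Fin (n+1) => if (i:ℕ) < m + 1 then v' i else v i) - h v
            = (h W - h v) + h (Function.update W k (v' k - v k)) := by
              rw [hW1, hupd, hWm]; abel
          _ ≤ m • g + g := add_le_add (ih hm') (hterm k W hWvals)
          _ = (m + 1) • g := (succ_nsmul g m).symm
    have hfin := claim (n+1) le_rfl
    have heq : (fun i : Fin (n+1) => if (i:ℕ) < n + 1 then v' i else v i) = v' := by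
      funext i
      rw [if_pos i.isLt]
    rwa [heq] at hfin
  -- multi-slot monotonicity
  have hmono_all : ∀ v v' : Fin (n+1) → M, (∀ i, v i ∈ N) → (∀ i, v' i ∈ N) →
      (∀ i, v i ≤ v' i) → h v ≤ h v' := by
    intro v v' hv hv' hle
    have hm := main v' v 0 ?_
    · rw [smul_zero] at hm
      exact sub_nonpos.mp hm
    · intro k u hu
      have huN : ∀ i, i ≠ k → u i ∈ N := by
        intro i _
        rcases hu i with e | e
        · rw [e]; exact hv' i
        · rw [e]; exact hv i
      have e1 : v k - v' k = (-1 : K) • (v' k - v k) := by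
        rw [neg_one_smul, neg_sub]
      rw [e1, h.map_update_smul u k (-1 : K) (v' k - v k), neg_one_smul]
      exact neg_nonpos.mpr (hpos u k _ (sub_nonneg.mpr (hle k)) huN)
  -- begin the main argument
  intro x hx ε hε
  set Z : Fin (n+1) → M := fun i => x i + φb' with hZdef
  have hZN : ∀ i, Z i ∈ N := fun i => hNadd _ (hx i) _ hφN
  choose c hc using fun k => hpullk Z k
  set C : K := 1 + ∑ k : Fin (n+1), max (c k) 0 with hCdef
  have hsum_nonneg : (0:K) ≤ ∑ k : Fin (n+1), max (c k) 0 :=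
    Finset.sum_nonneg fun k _ => le_max_right _ _
  have hCpos : (0:K) < C := by
    rw [hCdef]; linarith
  have hcC : ∀ k, c k ≤ C := by
    intro k
    have h1 : c k ≤ max (c k) 0 := le_max_left _ _
    have h2 : max (c k) 0 ≤ ∑ j : Fin (n+1), max (c j) 0 :=
      Finset.single_le_sum (fun j _ => le_max_right (c j) 0) (Finset.mem_univ k)
    rw [hCdef]; linarith
  set ε' : K := ε / ((n : K) + 1) with hε'def
  have hnpos : (0:K) < (n : K) + 1 := by positivity
  have hε'pos : 0 < ε' := div_pos hε hnpos
  set δ : K := min 1 (ε' / C) with hδdef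
  have hδpos : 0 < δ := lt_min one_pos (div_pos hε'pos hCpos)
  have hδ1 : δ ≤ 1 := min_le_left _ _
  have hδC : δ ≤ ε' / C := min_le_right _ _
  -- δ • b ≤ φb'
  have hδb : δ • b ≤ φb' := by
    have h1 : (0:M) ≤ (1 - δ) • b := by
      have := hsmul (1 - δ) (by linarith) 0 b hb
      rwa [smul_zero] at this
    have h2 : (1 - δ) • b = b - δ • b := by
      rw [sub_smul, one_smul]
    rw [h2] at h1
    have h3 : δ • b ≤ b := by
      have := add_le_add_right h1 (δ • b)
      simpa using this
    exact le_trans h3 hble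
  -- conversion of the (n+1)-fold sum bound
  have hns : (n+1) • (ε' • b') = ε • b' := by
    rw [← Nat.cast_smul_eq_nsmul K, smul_smul]
    congr 1
    rw [hε'def]
    push_cast
    field_simp
  refine ⟨δ, hδpos, ?_⟩
  intro y hy hbnd
  have hxZ : ∀ i, x i ≤ Z i := fun i => le_add_of_nonneg_right hφpos
  have hyZ : ∀ i, y i ≤ Z i := by
    intro i
    have h1 := (hbnd i).1
    have h2 : y i ≤ x i + δ • b := by
      have := add_le_add_left h1 (y i + δ • b)
      have h3 : -(δ • b) + (y i + δ • b) = y i := by abel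
      have h4 : x i - y i + (y i + δ • b) = x i + δ • b := by abel
      rw [h3, h4] at this
      exact this
    calc y i ≤ x i + δ • b := h2
      _ ≤ x i + φb' := add_le_add_right hδb _
      _ = Z i := rfl
  -- the key term bound
  have hterm_bd : ∀ (k : Fin (n+1)) (u : Fin (n+1) → M) (t : M),
      (∀ i, u i ∈ N) → (∀ i, u i ≤ Z i) → t ≤ δ • b →
      h (Function.update u k t) ≤ ε' • b' := by
    intro k u t huN huZ ht
    have huN' : ∀ i, i ≠ k → u i ∈ N := fun i _ => huN i
    have step4 : h (Function.update u k φb') ≤ h (Function.update Z k φb') := by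
      apply hmono_all
      · intro i
        rcases eq_or_ne i k with e | e
        · rw [e, Function.update_self]; exact hφN
        · rw [Function.update_of_ne e]; exact huN i
      · intro i
        rcases eq_or_ne i k with e | e
        · rw [e, Function.update_self]; exact hφN
        · rw [Function.update_of_ne e]; exact hZN i
      · intro i
        rcases eq_or_ne i k with e | e
        · rw [e, Function.update_self, Function.update_self]
        · rw [Function.update_of_ne e, Function.update_of_ne e]; exact huZ i
    have hdc : δ * c k ≤ ε' := by
      calc δ * c k ≤ δ * C := mul_le_mul_of_nonneg_left (hcC k) hδpos.le
        _ ≤ (ε' / C) * C := mul_le_mul_of_nonneg_right hδC hCpos.le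
        _ = ε' := div_mul_cancel₀ _ hCpos.ne'
    have hfinal : (δ * c k) • b' ≤ ε' • b' := by
      have h1 := hsmul' (ε' - δ * c k) (sub_nonneg.mpr hdc) 0 b' hb'pos
      rw [smul_zero, sub_smul] at h1
      have := add_le_add_right h1 ((δ * c k) • b')
      simpa using this
    calc h (Function.update u k t)
        ≤ h (Function.update u k (δ • b)) := hmono u k t (δ • b) ht huN'
      _ = δ • h (Function.update u k b) := h.map_update_smul u k δ b
      _ ≤ δ • h (Function.update u k φb') :=
          hsmul' δ hδpos.le _ _ (hmono u k b φb' hble huN')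
      _ ≤ δ • h (Function.update Z k φb') := hsmul' δ hδpos.le _ _ step4
      _ = δ • (c k • b') := by rw [hc k]
      _ = (δ * c k) • b' := smul_smul δ (c k) b'
      _ ≤ ε' • b' := hfinal
  have up : h y - h x ≤ ε • b' := by
    have hm := main x y (ε' • b') ?_
    · rwa [hns] at hm
    · intro k u hu
      apply hterm_bd k u (y k - x k)
      · intro i
        rcases hu i with e | e
        · rw [e]; exact hx i
        · rw [e]; exact hy i
      · intro i
        rcases hu i with e | e
        · rw [e]; exact hxZ i
        · rw [e]; exact hyZ i
      · have h1 := (hbnd k).1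
        have := add_le_add_left h1 (y k - x k + δ • b)
        have h3 : -(δ • b) + (y k - x k + δ • b) = y k - x k := by abel
        have h4 : x k - y k + (y k - x k + δ • b) = δ • b := by abel
        rw [h3, h4] at this
        exact this
  have lo : h x - h y ≤ ε • b' := by
    have hm := main y x (ε' • b') ?_
    · rwa [hns] at hm
    · intro k u hu
      apply hterm_bd k u (x k - y k)
      · intro i
        rcases hu i with e | e
        · rw [e]; exact hy i
        · rw [e]; exact hx i
      · intro i
        rcases hu i with e | e
        · rw [e]; exact hyZ i
        · rw [e]; exact hxZ i
      · exact (hbnd k).2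
  constructor
  · have := neg_le_neg lo
    rwa [neg_sub] at this
  · exact up
end

section
/- Let X be a locally compact Hausdorff space. Let (f_m) be a net of continuous real functions on X, uniformly bounded by a constant C, converging locally uniformly (uniformly on compact subsets) to a continuous function f. Let (μ_n) be a net of finite positive Radon measures converging weakly to a finite positive Radon measure μ. Then f_m·μ_n converges weakly to f·μ as (m,n) → ∞; in particular lim_{(m,n)→∞} ∫_X f_m dμ_n = ∫_X f dμ. -/
open MeasureTheory Filter Topology Set

private lemma aux18 {X : Type*} [TopologicalSpace X] [LocallyCompactSpace X] [T2Space X]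
    [MeasurableSpace X] [BorelSpace X]
    {ιJ ιI : Type*} (lJ : Filter ιJ) (lI : Filter ιI)
    (g : ιJ → X → ℝ) (hgc : ∀ m, Continuous (g m))
    (D : ℝ) (hD : ∀ m x, |g m x| ≤ D)
    (g0 : X → ℝ) (hg0c : Continuous g0)
    (hlu : TendstoLocallyUniformly g g0 lJ)
    (μ : Measure X) [IsFiniteMeasure μ] [Measure.Regular μ]
    (μs : ιI → Measure X) [∀ i, IsFiniteMeasure (μs i)] [∀ i, Measure.Regular (μs i)]
    (hweak : ∀ φ : BoundedContinuousFunction X ℝ,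
        Tendsto (fun i => ∫ x, φ x ∂(μs i)) lI (𝓝 (∫ x, φ x ∂μ))) :
    Tendsto (fun p : ιJ × ιI => ∫ x, g p.1 x ∂(μs p.2)) (lJ ×ˢ lI) (𝓝 (∫ x, g0 x ∂μ)) := by
  rcases eq_or_neBot lJ with rfl | hJ
  · rw [Filter.bot_prod]; exact tendsto_bot
  -- a positive uniform bound
  set D' : ℝ := max D 1 with hD'def
  have hD' : ∀ m x, |g m x| ≤ D' := fun m x => (hD m x).trans (le_max_left _ _)
  have hD'pos : (0:ℝ) < D' := lt_of_lt_of_le one_pos (le_max_right _ _)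
  have hg0D : ∀ x, |g0 x| ≤ D' := by
    intro x
    have hpt : Tendsto (fun m => g m x) lJ (𝓝 (g0 x)) :=
      ((tendstoLocallyUniformly_iff_forall_isCompact.mp hlu) {x}
        isCompact_singleton).tendsto_at (Set.mem_singleton x)
    exact le_of_tendsto ((continuous_abs.tendsto _).comp hpt)
      (Eventually.of_forall fun m => hD' m x)
  -- bounded continuous versions
  have norm_eq : ∀ y : ℝ, ‖y‖ = |y| := fun y => Real.norm_eq_abs y
  set bcfm : ιJ → BoundedContinuousFunction X ℝ := fun m =>
    BoundedContinuousFunction.ofNormedAddCommGroup (g m) (hgc m) D'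
      (fun x => by rw [norm_eq]; exact hD' m x) with hbcfm
  set bcf0 : BoundedContinuousFunction X ℝ :=
    BoundedContinuousFunction.ofNormedAddCommGroup g0 hg0c D'
      (fun x => by rw [norm_eq]; exact hg0D x) with hbcf0
  have intgm : ∀ m i, Integrable (g m) (μs i) := fun m i => (bcfm m).integrable (μs i)
  have intg0 : ∀ i, Integrable g0 (μs i) := fun i => bcf0.integrable (μs i)
  -- masses converge
  have tendsto_mass : Tendsto (fun i => ((μs i) univ).toReal) lI (𝓝 ((μ univ).toReal)) := by
    have h1 := hweak 1
    simp at h1; exact h1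
  set M : ℝ := (μ univ).toReal + 1 with hMdef
  have hMpos : (0:ℝ) < M := by positivity
  have hMlt : (μ univ).toReal < M := by rw [hMdef]; linarith
  rw [Metric.tendsto_nhds]
  intro ε hε
  set δ : ℝ := ε / (4 * M) with hδdef
  have hδpos : (0:ℝ) < δ := by positivity
  have e1 : δ * M = ε/4 := by rw [hδdef]; field_simp
  set t : ℝ := ε / (8 * D') with htdef
  have htpos : (0:ℝ) < t := by positivity
  have e2 : 2*D' * t = ε/4 := by rw [htdef]; field_simp; ring
  clear_value M δ t
  -- compact K with small complement
  obtain ⟨K, -, hKc, hKsmall⟩ :=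
    MeasurableSet.univ.exists_isCompact_diff_lt (μ := μ) (measure_ne_top μ univ)
      (ε := ENNReal.ofReal (t/2)) (by simp [ENNReal.ofReal_eq_zero]; linarith)
  have hKcompl : (μ (Kᶜ)).toReal ≤ t/2 := by
    have h1 : μ (Kᶜ) ≤ ENNReal.ofReal (t/2) := by
      rw [Set.compl_eq_univ_diff]; exact le_of_lt hKsmall
    calc (μ (Kᶜ)).toReal ≤ (ENNReal.ofReal (t/2)).toReal :=
          ENNReal.toReal_mono ENNReal.ofReal_ne_top h1
      _ = t/2 := ENNReal.toReal_ofReal (by linarith)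
  have hKmass : (μ univ).toReal ≤ (μ K).toReal + t/2 := by
    have hsplit : (μ K) + (μ (Kᶜ)) = μ univ :=
      measure_add_measure_compl hKc.measurableSet
    have := congrArg ENNReal.toReal hsplit
    rw [ENNReal.toReal_add (measure_ne_top μ K) (measure_ne_top μ Kᶜ)] at this
    linarith [hKcompl, this]
  -- open W ⊇ K with compact closure
  obtain ⟨W, hWo, hKW, hWcl⟩ := exists_isOpen_superset_and_isCompact_closure hKc
  -- Urysohn function
  obtain ⟨ρ, hρK, hρW, hρcs, hρ01⟩ :=
    exists_continuous_one_zero_of_isCompact hKc hWo.isClosed_compl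
      (disjoint_compl_right_iff_subset.mpr hKW)
  set bρ : BoundedContinuousFunction X ℝ :=
    BoundedContinuousFunction.ofNormedAddCommGroup ρ ρ.continuous 1
      (fun x => by rw [norm_eq]; rw [abs_le]; constructor
                   · linarith [(hρ01 x).1]
                   · exact (hρ01 x).2) with hbρ
  -- ∫ ρ dμ ≥ μ K
  have hρμ : (μ K).toReal ≤ ∫ x, ρ x ∂μ := by
    have h1 : ∫ x, K.indicator (1 : X → ℝ) x ∂μ ≤ ∫ x, ρ x ∂μ := by
      apply integral_mono ((integrable_const (1:ℝ)).indicator hKc.measurableSet)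
        (show Integrable (⇑ρ) μ from bρ.integrable μ)
      intro x
      by_cases hx : x ∈ K
      · simp [Set.indicator_of_mem hx, (hρK hx)]
      · simp only [Set.indicator_of_notMem hx]
        exact (hρ01 x).1
    rwa [integral_indicator_one hKc.measurableSet] at h1
  -- ∫ ρ dμs i ≤ μs i W
  have hρμs : ∀ i, ∫ x, ρ x ∂(μs i) ≤ ((μs i) W).toReal := by
    intro i
    have h1 : ∫ x, ρ x ∂(μs i) ≤ ∫ x, W.indicator (1 : X → ℝ) x ∂(μs i) := by
      apply integral_mono (show Integrable (⇑ρ) (μs i) from bρ.integrable (μs i))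
        ((integrable_const (1:ℝ)).indicator hWo.measurableSet)
      intro x
      by_cases hx : x ∈ W
      · simp only [Set.indicator_of_mem hx, Pi.one_apply]
        exact (hρ01 x).2
      · simp [Set.indicator_of_notMem hx, (hρW hx)]
    rwa [integral_indicator_one hWo.measurableSet] at h1
  -- tail mass eventually small
  have hρtendsto : Tendsto (fun i => ∫ x, ρ x ∂(μs i)) lI (𝓝 (∫ x, ρ x ∂μ)) := by
    have := hweak bρ
    simpa [hbρ] using this
  have h_tail : ∀ᶠ i in lI, ((μs i) (Wᶜ)).toReal ≤ t := by
    have hlim : Tendsto (fun i => ((μs i) univ).toReal - ∫ x, ρ x ∂(μs i)) lI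
        (𝓝 ((μ univ).toReal - ∫ x, ρ x ∂μ)) := tendsto_mass.sub hρtendsto
    have hlt : (μ univ).toReal - ∫ x, ρ x ∂μ < t := by linarith
    filter_upwards [hlim.eventually_lt_const hlt] with i hi
    have hsplit : ((μs i) W) + ((μs i) (Wᶜ)) = (μs i) univ :=
      measure_add_measure_compl hWo.measurableSet
    have := congrArg ENNReal.toReal hsplit
    rw [ENNReal.toReal_add (measure_ne_top _ _) (measure_ne_top _ _)] at this
    have := hρμs i
    linarith
  have h_mass : ∀ᶠ i in lI, ((μs i) univ).toReal ≤ M :=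
    (tendsto_mass.eventually_lt_const hMlt).mono fun i hi => le_of_lt hi
  -- weak convergence for g0
  have h_weak0 : ∀ᶠ i in lI, |(∫ x, g0 x ∂(μs i)) - ∫ x, g0 x ∂μ| < ε/4 := by
    have h1 := hweak bcf0
    simp only [hbcf0, BoundedContinuousFunction.coe_ofNormedAddCommGroup] at h1
    have := (Metric.tendsto_nhds.mp h1) (ε/4) (by linarith)
    simpa [Real.dist_eq] using this
  -- uniform convergence on closure W
  have h_unif : ∀ᶠ m in lJ, ∀ x ∈ closure W, dist (g0 x) (g m x) < δ := by
    have hun : TendstoUniformlyOn g g0 lJ (closure W) :=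
      (tendstoLocallyUniformly_iff_forall_isCompact.mp hlu) (closure W) hWcl
    exact (Metric.tendstoUniformlyOn_iff.mp hun) δ hδpos
  -- combine
  filter_upwards [h_unif.prod_inl lI, ((h_tail.and h_mass).and h_weak0).prod_inr lJ]
    with p hp1 hp2
  obtain ⟨⟨htail, hmass⟩, hweak0⟩ := hp2
  set m := p.1
  set ν := μs p.2
  rw [Real.dist_eq]
  -- estimate |∫ g m dν − ∫ g0 dν|
  have hint : Integrable (fun x => δ + (Wᶜ).indicator (fun _ => 2*D') x) ν :=
    (integrable_const δ).add ((integrable_const (2*D')).indicator hWo.measurableSet.compl)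
  have key : |(∫ x, g m x ∂ν) - ∫ x, g0 x ∂ν| ≤
      δ * (ν univ).toReal + 2*D' * (ν (Wᶜ)).toReal := by
    rw [← integral_sub (intgm m p.2) (intg0 p.2)]
    calc |∫ x, (g m x - g0 x) ∂ν| ≤ ∫ x, |g m x - g0 x| ∂ν := by
          simpa [Real.norm_eq_abs] using norm_integral_le_integral_norm (fun x => g m x - g0 x) (μ := ν)
      _ ≤ ∫ x, (δ + (Wᶜ).indicator (fun _ => 2*D') x) ∂ν := by
          apply integral_mono ((intgm m p.2).sub (intg0 p.2)).abs hint
          intro x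
          simp only [Pi.sub_apply]
          by_cases hx : x ∈ W
          · have hd := hp1 x (subset_closure hx)
            rw [Real.dist_eq, abs_sub_comm] at hd
            simp only [Set.indicator_of_notMem (by simpa using hx : x ∉ Wᶜ)]
            linarith
          · have h1 : |g m x - g0 x| ≤ 2*D' := by
              calc |g m x - g0 x| ≤ |g m x| + |g0 x| := abs_sub _ _
                _ ≤ D' + D' := add_le_add (hD' m x) (hg0D x)
                _ = 2*D' := by ring
            simp only [Set.indicator_of_mem (by simpa using hx : x ∈ Wᶜ)]
            linarith
      _ = δ * (ν univ).toReal + 2*D' * (ν (Wᶜ)).toReal := by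
          rw [integral_add (integrable_const δ)
            ((integrable_const (2*D')).indicator hWo.measurableSet.compl),
            integral_const, integral_indicator_const _ hWo.measurableSet.compl]
          simp [mul_comm]; rfl
  have key2 : δ * (ν univ).toReal + 2*D' * (ν (Wᶜ)).toReal ≤ ε/4 + ε/4 := by
    have h1 : δ * (ν univ).toReal ≤ δ * M :=
      mul_le_mul_of_nonneg_left hmass (le_of_lt hδpos)
    have h2 : 2*D' * (ν (Wᶜ)).toReal ≤ 2*D' * t :=
      mul_le_mul_of_nonneg_left htail (by linarith)
    calc δ * (ν univ).toReal + 2*D' * (ν (Wᶜ)).toReal ≤ δ * M + 2*D' * t :=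
          add_le_add h1 h2
      _ = ε/4 + ε/4 := by rw [e1, e2]
  calc |(∫ x, g m x ∂ν) - ∫ x, g0 x ∂μ|
      ≤ |(∫ x, g m x ∂ν) - ∫ x, g0 x ∂ν| + |(∫ x, g0 x ∂ν) - ∫ x, g0 x ∂μ| :=
        abs_sub_le _ _ _
    _ < (ε/4 + ε/4) + ε/4 := by
        have := key.trans key2
        linarith
    _ < ε := by linarith

/-- Let `X` be locally compact Hausdorff, `(f_m)` a net of
continuous functions, uniformly bounded by a constant `C`, converging locally
uniformly to a continuous `f`, and `(μ_n)` a net of finite positive Radon measures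
converging weakly to a finite positive Radon measure `μ`.  Then `f_m·μ_n → f·μ`
weakly as `(m,n) → ∞`; in particular `∫ f_m dμ_n → ∫ f dμ`. -/
theorem statement18 {X : Type*} [TopologicalSpace X] [LocallyCompactSpace X] [T2Space X]
    [MeasurableSpace X] [BorelSpace X]
    {ιJ ιI : Type*} (lJ : Filter ιJ) (lI : Filter ιI)
    (fm : ιJ → X → ℝ) (hfmc : ∀ m, Continuous (fm m))
    (C : ℝ) (hC : ∀ m x, |fm m x| ≤ C)
    (f : X → ℝ) (hfc : Continuous f)
    (hlocunif : TendstoLocallyUniformly fm f lJ)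
    (μ : Measure X) [IsFiniteMeasure μ] [Measure.Regular μ]
    (μs : ιI → Measure X) [∀ i, IsFiniteMeasure (μs i)] [∀ i, Measure.Regular (μs i)]
    (hweak : ∀ φ : BoundedContinuousFunction X ℝ,
        Tendsto (fun i => ∫ x, φ x ∂(μs i)) lI (𝓝 (∫ x, φ x ∂μ))) :
    (∀ φ : BoundedContinuousFunction X ℝ,
      Tendsto (fun p : ιJ × ιI => ∫ x, φ x * fm p.1 x ∂(μs p.2)) (lJ ×ˢ lI)
        (𝓝 (∫ x, φ x * f x ∂μ))) ∧
    Tendsto (fun p : ιJ × ιI => ∫ x, fm p.1 x ∂(μs p.2)) (lJ ×ˢ lI)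
      (𝓝 (∫ x, f x ∂μ)) := by
  constructor
  · intro φ
    have hlu' : TendstoLocallyUniformly (fun m x => φ x * fm m x) (fun x => φ x * f x) lJ := by
      rw [tendstoLocallyUniformly_iff_forall_isCompact]
      intro K hK
      have hun : TendstoUniformlyOn fm f lJ K :=
        (tendstoLocallyUniformly_iff_forall_isCompact.mp hlocunif) K hK
      rw [Metric.tendstoUniformlyOn_iff] at hun ⊢
      intro ε hε
      have hφpos : (0:ℝ) < ‖φ‖ + 1 := by positivity
      filter_upwards [hun (ε / (‖φ‖ + 1)) (by positivity)] with m hm x hx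
      have hd := hm x hx
      rw [Real.dist_eq] at hd ⊢
      have h1 : |φ x * f x - φ x * fm m x| = |φ x| * |f x - fm m x| := by
        rw [← abs_mul]; ring_nf
      rw [h1]
      have h2 : |φ x| * |f x - fm m x| ≤ (‖φ‖ + 1) * |f x - fm m x| :=
        mul_le_mul_of_nonneg_right (by linarith [φ.norm_coe_le_norm x,
          (Real.norm_eq_abs (φ x)) ▸ φ.norm_coe_le_norm x]) (abs_nonneg _)
      have h3 : (‖φ‖ + 1) * |f x - fm m x| < (‖φ‖ + 1) * (ε / (‖φ‖ + 1)) :=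
        mul_lt_mul_of_pos_left hd hφpos
      have h4 : (‖φ‖ + 1) * (ε / (‖φ‖ + 1)) = ε := by field_simp
      linarith
    exact aux18 lJ lI (fun m x => φ x * fm m x)
      (fun m => φ.continuous.mul (hfmc m)) (‖φ‖ * C)
      (fun m x => by
        rw [abs_mul]
        exact mul_le_mul ((Real.norm_eq_abs (φ x)) ▸ φ.norm_coe_le_norm x) (hC m x)
          (abs_nonneg _) (norm_nonneg φ))
      (fun x => φ x * f x) (φ.continuous.mul hfc) hlu' μ μs hweak
  · exact aux18 lJ lI fm hfmc C hC f hfc hlocunif μ μs hweak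
end
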